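/- Let G be a graph and I a maximum critical independent set of G. For every maximum matching M of the induced subgraph G[L(G)], core(G) ∩ L(G) = M(N(I) \ corona(G)) ∪ D(G[L(G)]), where M(X) denotes the set of matching partners of vertices in X, and D(H) = {v : some maximum matching of H misses v}. -/

import Mathlib

open Finset

variable {V : Type*} [Fintype V] [DecidableEq V] (G : SimpleGraph V) [DecidableRel G.Adj]

/-- `N(S)`: the set of vertices adjacent to some vertex of `S`. -/
def nbhd (S : Finset V) : Finset V := S.biUnion (fun v => G.neighborFinset v)

/-- `S` is an independent set of `G`. -/
def Indep (S : Finset V) : Prop := ∀ u ∈ S, ∀ v ∈ S, ¬ G.Adj u v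

/-- The difference `d_G(S) = |S| - |N(S)|`. -/
def diffI (S : Finset V) : ℤ := (S.card : ℤ) - ((nbhd G S).card : ℤ)

/-- `S` is a maximum independent set of `G`. -/
def IsMaxIndep (S : Finset V) : Prop :=
  Indep G S ∧ ∀ T : Finset V, Indep G T → T.card ≤ S.card

/-- `I` is a critical independent set of `G`. -/
def IsCritIndep (I : Finset V) : Prop :=
  Indep G I ∧ ∀ J : Finset V, Indep G J → diffI G J ≤ diffI G I

/-- `I` is a maximum critical independent set of `G`. -/
def IsMaxCritIndep (I : Finset V) : Prop :=
  IsCritIndep G I ∧ ∀ J : Finset V, IsCritIndep G J → J.card ≤ I.card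

/-- `core(G)`: intersection of all maximum independent sets. -/
def core : Set V := {v | ∀ S : Finset V, IsMaxIndep G S → v ∈ S}

/-- `corona(G)`: union of all maximum independent sets. -/
def corona : Set V := {v | ∃ S : Finset V, IsMaxIndep G S ∧ v ∈ S}

/-- `nucleus(G)`: intersection of all maximum critical independent sets. -/
def nucleus : Set V := {v | ∀ S : Finset V, IsMaxCritIndep G S → v ∈ S}

/-- `diadem(G)`: union of all maximum critical independent sets. -/
def diadem : Set V := {v | ∃ S : Finset V, IsMaxCritIndep G S ∧ v ∈ S}

/-- `ker(G)`: intersection of all critical independent sets. -/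
def kerS : Set V := {v | ∀ S : Finset V, IsCritIndep G S → v ∈ S}

/-- A matching of `G`, given as an involution of the vertex set:
unmatched vertices are fixed points, matched vertices are sent to their partner. -/
def IsMatching (M : V → V) : Prop :=
  Function.Involutive M ∧ ∀ v, M v ≠ v → G.Adj v (M v)

/-- Twice the number of edges of the matching `M`, i.e. the number of matched vertices. -/
def matchSize (M : V → V) : ℕ := (univ.filter fun v => M v ≠ v).card

/-- `M` is a maximum matching of `G`. -/
def IsMaxMatching (M : V → V) : Prop :=
  IsMatching G M ∧ ∀ M' : V → V, IsMatching G M' → matchSize M' ≤ matchSize M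

/-- `M` is a matching of the induced subgraph `G[L]`. -/
def IsMatchingOn (L : Finset V) (M : V → V) : Prop :=
  IsMatching G M ∧ ∀ v, M v ≠ v → v ∈ L

/-- `M` is a maximum matching of the induced subgraph `G[L]`. -/
def IsMaxMatchingOn (L : Finset V) (M : V → V) : Prop :=
  IsMatchingOn G L M ∧ ∀ M' : V → V, IsMatchingOn G L M' → matchSize M' ≤ matchSize M

/-- `S` is a maximum independent set of the induced subgraph `G[L]`. -/
def IsMaxIndepOn (L : Finset V) (S : Finset V) : Prop :=
  S ⊆ L ∧ Indep G S ∧ ∀ T : Finset V, T ⊆ L → Indep G T → T.card ≤ S.card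

/-- `core` of the induced subgraph `G[L]`. -/
def coreOn (L : Finset V) : Set V := {v | ∀ S : Finset V, IsMaxIndepOn G L S → v ∈ S}

/-- `D(G[L])`: vertices of `L` missed by some maximum matching of `G[L]`. -/
def Dset (L : Finset V) : Set V := {v | v ∈ L ∧ ∃ M : V → V, IsMaxMatchingOn G L M ∧ M v = v}

/-- The Larson boundary `∂_L(G)` of the set `L`. -/
def boundaryL (L : Finset V) : Set V := {v | v ∈ L ∧ ∃ w, w ∉ L ∧ G.Adj v w}

/-- The critical difference `d(G)`. -/
noncomputable def critDiff : ℤ := sSup {d : ℤ | ∃ X : Finset V, diffI G X = d}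

/-- The difference of `S` computed in the induced subgraph `G[L]`. -/
def diffOn (L : Finset V) (S : Finset V) : ℤ := (S.card : ℤ) - ((nbhd G S ∩ L).card : ℤ)

/-- The critical difference of the induced subgraph `G[L]`. -/
noncomputable def critDiffOn (L : Finset V) : ℤ := sSup {d : ℤ | ∃ X : Finset V, X ⊆ L ∧ diffOn G L X = d}

/-- `G` is a König–Egerváry graph: `α(G) + μ(G) = |V(G)|`. -/
def KonigEgervary : Prop :=
  ∃ (S : Finset V) (M : V → V), IsMaxIndep G S ∧ IsMaxMatching G M ∧
    2 * S.card + matchSize M = 2 * Fintype.card V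

/-!
Write `L = I ∪ N(I)`. Criticality of `I` implies Hall's condition for matching `N(I)` into `I`,
so every maximum matching `M` of `G[L]` matches `N(I)` into `I`. Collapsing each pair
`{u, M u}` onto its endpoint in `I` is injective on independent sets, so an independent set meets
`L` in at most `|I|` vertices; exchanging `S ∩ L` for `I` in a maximum independent set `S` shows
that it meets `L` in at least `|I|` vertices. Hence every maximum independent set contains one
vertex of each pair `{u, M u}` and every vertex of `L` missed by `M`, while some maximum
independent set meets `L` exactly in `I`. Both inclusions follow.
-/

variable {G}

lemma mem_nbhd {S : Finset V} {v : V} : v ∈ nbhd G S ↔ ∃ u ∈ S, G.Adj u v := by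
  simp [nbhd]

lemma Indep.notMem_nbhd {I : Finset V} (hI : Indep G I) {v : V} (hv : v ∈ I) :
    v ∉ nbhd G I := fun h ↦ by
  obtain ⟨u, hu, hadj⟩ := mem_nbhd.1 h
  exact hI u hu v hv hadj

def matched (M : V → V) : Finset V := univ.filter fun v ↦ M v ≠ v

lemma mem_matched {M : V → V} {v : V} : v ∈ matched M ↔ M v ≠ v := by
  simp [matched]

lemma matchSize_eq_card_matched (M : V → V) : matchSize M = #(matched M) := rfl

section Matching

variable {M : V → V}

lemma image_matched_sdiff_subset (hM : Function.Involutive M) {A : Finset V}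
    (hcover : ∀ v, M v ≠ v → v ∈ A ∨ M v ∈ A) :
    (matched M \ A).image M ⊆ matched M ∩ A := by
  intro w hw
  obtain ⟨v, hv, rfl⟩ := mem_image.1 hw
  rw [mem_sdiff, mem_matched] at hv
  rw [mem_inter, mem_matched, hM v]
  exact ⟨Ne.symm hv.1, (hcover v hv.1).resolve_left hv.2⟩

lemma matchSize_le_two_mul_card (hM : Function.Involutive M) {A : Finset V}
    (hcover : ∀ v, M v ≠ v → v ∈ A ∨ M v ∈ A) : matchSize M ≤ 2 * #A := by
  have hsub := card_le_card (image_matched_sdiff_subset hM hcover)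
  rw [card_image_of_injective _ hM.injective] at hsub
  have := card_le_card (inter_subset_right : matched M ∩ A ⊆ A)
  have := card_sdiff_add_card_inter (matched M) A
  rw [matchSize_eq_card_matched]
  omega

lemma notMem_of_matchSize_eq (hM : Function.Involutive M) {A : Finset V}
    (hcover : ∀ v, M v ≠ v → v ∈ A ∨ M v ∈ A) (hsize : matchSize M = 2 * #A)
    {u : V} (hu : u ∈ A) : M u ∉ A := by
  rw [matchSize_eq_card_matched] at hsize
  have hsub := image_matched_sdiff_subset hM hcover
  have himage := card_image_of_injective (matched M \ A) hM.injective
  have := card_le_card hsub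
  have := card_le_card (inter_subset_right : matched M ∩ A ⊆ A)
  have := card_sdiff_add_card_inter (matched M) A
  have hMA : matched M ∩ A = A := eq_of_subset_of_card_le inter_subset_right (by omega)
  have heq : (matched M \ A).image M = A := (eq_of_subset_of_card_le hsub (by omega)).trans hMA
  obtain ⟨w, hw, rfl⟩ := mem_image.1 (heq ▸ hu)
  rw [hM w]
  exact (mem_sdiff.1 hw).2

lemma exists_isMatching_of_injOn {W : Type*} [DecidableEq W] {H : SimpleGraph W}
    {A : Finset W} {f : W → W} (hinj : Set.InjOn f A) (hout : ∀ u ∈ A, f u ∉ A)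
    (hadj : ∀ u ∈ A, H.Adj u (f u)) :
    ∃ M : W → W, IsMatching H M ∧ ∀ v, M v ≠ v ↔ v ∈ A ∪ A.image f := by
  classical
  let M : W → W := fun v ↦
    if v ∈ A then f v else if h : ∃ u ∈ A, f u = v then h.choose else v
  have hMA : ∀ u ∈ A, M u = f u := fun u hu ↦ if_pos hu
  have hMf : ∀ u ∈ A, M (f u) = u := fun u hu ↦ by
    have h : ∃ w ∈ A, f w = f u := ⟨u, hu, rfl⟩
    simp only [M, if_neg (hout u hu), dif_pos h]
    exact hinj h.choose_spec.1 hu h.choose_spec.2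
  have hMrest : ∀ v ∉ A ∪ A.image f, M v = v := fun v hv ↦ by
    simp only [mem_union, mem_image, not_or, not_exists, not_and] at hv
    have h : ¬ ∃ u ∈ A, f u = v := fun ⟨u, hu, he⟩ ↦ hv.2 u hu he
    simp only [M, if_neg hv.1, dif_neg h]
  have hsupp : ∀ v, M v ≠ v ↔ v ∈ A ∪ A.image f := fun v ↦ by
    refine ⟨fun h ↦ by_contra fun hv ↦ h (hMrest v hv), fun hv ↦ ?_⟩
    rcases mem_union.1 hv with hv | hv
    · rw [hMA v hv]
      exact fun h ↦ hout v hv (by rwa [h])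
    · obtain ⟨u, hu, rfl⟩ := mem_image.1 hv
      rw [hMf u hu]
      exact fun h ↦ hout u hu (by rwa [← h])
  refine ⟨M, ⟨fun v ↦ ?_, fun v hv ↦ ?_⟩, hsupp⟩
  · by_cases hv : v ∈ A ∪ A.image f
    · rcases mem_union.1 hv with hv | hv
      · rw [hMA v hv, hMf v hv]
      · obtain ⟨u, hu, rfl⟩ := mem_image.1 hv
        rw [hMf u hu, hMA u hu]
    · rw [hMrest v hv, hMrest v hv]
  · rcases mem_union.1 ((hsupp v).1 hv) with hv | hv
    · rw [hMA v hv]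
      exact hadj v hv
    · obtain ⟨u, hu, rfl⟩ := mem_image.1 hv
      rw [hMf u hu]
      exact (hadj u hu).symm

end Matching

section Critical

variable {I : Finset V}

/-- Hall's condition for matching `N(I)` into `I`: if some `B ⊆ N(I)` had too few neighbours in
`I`, removing them from `I` would increase `|I| - |N(I)|`. -/
lemma IsCritIndep.card_le_card_nbhd_inter (hI : IsCritIndep G I) {B : Finset V}
    (hB : B ⊆ nbhd G I) : #B ≤ #(nbhd G B ∩ I) := by
  have hJ : Indep G (I \ nbhd G B) := fun u hu w hw ↦
    hI.1 u (sdiff_subset hu) w (sdiff_subset hw)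
  have hsub : nbhd G (I \ nbhd G B) ⊆ nbhd G I \ B := fun w hw ↦ by
    obtain ⟨u, hu, hadj⟩ := mem_nbhd.1 hw
    rw [mem_sdiff] at hu ⊢
    exact ⟨mem_nbhd.2 ⟨u, hu.1, hadj⟩, fun hwB ↦ hu.2 (mem_nbhd.2 ⟨w, hwB, hadj.symm⟩)⟩
  have := card_le_card hsub
  have := card_sdiff_add_card_eq_card hB
  have : #(I \ nbhd G B) + #(nbhd G B ∩ I) = #I :=
    inter_comm I _ ▸ card_sdiff_add_card_inter _ _
  have := hI.2 _ hJ
  unfold diffI at *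
  omega

lemma IsCritIndep.exists_isMatchingOn (hI : IsCritIndep G I) :
    ∃ M : V → V, IsMatchingOn G (I ∪ nbhd G I) M ∧ matchSize M = 2 * #(nbhd G I) := by
  classical
  set A := nbhd G I
  have hall : ∀ s : Finset A, #s ≤ #(s.biUnion fun u ↦ G.neighborFinset u ∩ I) := fun s ↦ by
    have hbi : s.biUnion (fun u ↦ G.neighborFinset u ∩ I) = nbhd G (s.map (.subtype _)) ∩ I := by
      ext w
      simp [mem_nbhd, ← exists_and_right, and_assoc]
    rw [hbi, ← card_map (.subtype _)]
    exact hI.card_le_card_nbhd_inter fun x hx ↦ by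
      obtain ⟨u, -, rfl⟩ := mem_map.1 hx
      exact u.2
  obtain ⟨f, hfinj, hf⟩ := (all_card_le_biUnion_card_iff_exists_injective _).1 hall
  simp only [mem_inter, SimpleGraph.mem_neighborFinset] at hf
  let g : V → V := fun v ↦ if h : v ∈ A then f ⟨v, h⟩ else v
  have hg : ∀ u (hu : u ∈ A), g u = f ⟨u, hu⟩ := fun u hu ↦ dif_pos hu
  have hgI : ∀ u ∈ A, g u ∈ I := fun u hu ↦ hg u hu ▸ (hf _).2
  have hginj : Set.InjOn g A := fun u hu w hw h ↦ by
    rw [hg u hu, hg w hw] at h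
    exact congrArg Subtype.val (hfinj h)
  have hgout : ∀ u ∈ A, g u ∉ A := fun u hu ↦ hI.1.notMem_nbhd (hgI u hu)
  obtain ⟨M, hM, hsupp⟩ := exists_isMatching_of_injOn hginj hgout fun u hu ↦ hg u hu ▸ (hf _).1
  refine ⟨M, ⟨hM, fun v hv ↦ ?_⟩, ?_⟩
  · rcases mem_union.1 ((hsupp v).1 hv) with hv | hv
    · exact mem_union_right _ hv
    · obtain ⟨u, hu, rfl⟩ := mem_image.1 hv
      exact mem_union_left _ (hgI u hu)
  · have hdisj : Disjoint A (A.image g) :=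
      disjoint_right.2 fun v hv ↦ by
        obtain ⟨u, hu, rfl⟩ := mem_image.1 hv
        exact hgout u hu
    rw [matchSize, filter_congr fun v _ ↦ hsupp v, filter_mem_eq_inter, univ_inter,
      card_union_of_disjoint hdisj, card_image_of_injOn hginj, two_mul]

lemma IsMatchingOn.mem_nbhd_or_mem_nbhd (hI : Indep G I) {M : V → V}
    (hM : IsMatchingOn G (I ∪ nbhd G I) M) {v : V} (hv : M v ≠ v) :
    v ∈ nbhd G I ∨ M v ∈ nbhd G I := by
  have hMv : M (M v) ≠ M v := by rw [hM.1.1 v]; exact hv.symm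
  rcases mem_union.1 (hM.2 v hv) with h | h
  · rcases mem_union.1 (hM.2 _ hMv) with h' | h'
    · exact absurd (hM.1.2 v hv) (hI v h _ h')
    · exact Or.inr h'
  · exact Or.inl h

lemma IsMaxMatchingOn.mem_of_mem_nbhd (hI : IsCritIndep G I) {M : V → V}
    (hM : IsMaxMatchingOn G (I ∪ nbhd G I) M) {u : V} (hu : u ∈ nbhd G I) : M u ∈ I := by
  have hcover := fun v ↦ hM.1.mem_nbhd_or_mem_nbhd hI.1 (v := v)
  obtain ⟨M₀, hM₀, hM₀size⟩ := hI.exists_isMatchingOn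
  have hsize : matchSize M = 2 * #(nbhd G I) :=
    le_antisymm (matchSize_le_two_mul_card hM.1.1.1 hcover) (hM₀size ▸ hM.2 M₀ hM₀)
  have hout := notMem_of_matchSize_eq hM.1.1.1 hcover hsize hu
  have hne : M u ≠ u := fun h ↦ hout (by rwa [h])
  have hMne : M (M u) ≠ M u := by rw [hM.1.1.1 u]; exact hne.symm
  exact (mem_union.1 (hM.1.2 _ hMne)).resolve_right hout

end Critical

section Projection

variable {I : Finset V} {M : V → V}

def projNbhd (G : SimpleGraph V) [DecidableRel G.Adj] (I : Finset V) (M : V → V) (v : V) : V :=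
  if v ∈ nbhd G I then M v else v

lemma projNbhd_eq_or_eq (v : V) : projNbhd G I M v = v ∨ projNbhd G I M v = M v := by
  unfold projNbhd
  split_ifs <;> simp

lemma mapsTo_projNbhd (hMI : ∀ u ∈ nbhd G I, M u ∈ I) :
    Set.MapsTo (projNbhd G I M) ↑(I ∪ nbhd G I) ↑I := fun v hv ↦ by
  unfold projNbhd
  split_ifs with h
  · exact hMI v h
  · exact (mem_union.1 hv).resolve_right h

lemma injOn_projNbhd (hI : Indep G I) (hM : IsMatching G M) (hMI : ∀ u ∈ nbhd G I, M u ∈ I)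
    {T : Finset V} (hT : Indep G T) : Set.InjOn (projNbhd G I M) T := by
  have hadj : ∀ u ∈ nbhd G I, G.Adj u (M u) := fun u hu ↦
    hM.2 u fun h ↦ hI.notMem_nbhd (hMI u hu) (by rwa [h])
  intro x hx y hy hxy
  unfold projNbhd at hxy
  split_ifs at hxy with h₁ h₂ h₂
  · exact hM.1.injective hxy
  · exact absurd (hxy ▸ hadj x h₁) (hT x hx y hy)
  · exact absurd (hxy ▸ hadj y h₂) (hT y hy x hx)
  · exact hxy

lemma card_inter_le_of_indep (hI : Indep G I) (hM : IsMatching G M)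
    (hMI : ∀ u ∈ nbhd G I, M u ∈ I) {T : Finset V} (hT : Indep G T) :
    #(T ∩ (I ∪ nbhd G I)) ≤ #I :=
  card_le_card_of_injOn _ ((mapsTo_projNbhd hMI).mono_left (by simp))
    ((injOn_projNbhd hI hM hMI hT).mono (by simp))

lemma mem_or_mem_of_card_le (hI : Indep G I) (hM : IsMatching G M)
    (hMI : ∀ u ∈ nbhd G I, M u ∈ I) {T : Finset V} (hT : Indep G T)
    (hcard : #I ≤ #(T ∩ (I ∪ nbhd G I))) {x : V} (hx : x ∈ I) : x ∈ T ∨ M x ∈ T := by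
  obtain ⟨w, hw, hwx⟩ := surjOn_of_injOn_of_card_le _
    ((mapsTo_projNbhd hMI).mono_left (by simp))
    ((injOn_projNbhd hI hM hMI hT).mono (by simp)) hcard hx
  have hwT : w ∈ T := (mem_inter.1 hw).1
  rcases projNbhd_eq_or_eq (G := G) (I := I) (M := M) w with h | h <;> rw [h] at hwx
  · exact Or.inl (hwx ▸ hwT)
  · exact Or.inr (by rwa [← hwx, hM.1 w])

end Projection

section MaxIndep

variable {I S : Finset V}

lemma Indep.sdiff_union (hI : Indep G I) (hS : Indep G S) :
    Indep G (S \ (I ∪ nbhd G I) ∪ I) := by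
  have hout : ∀ u ∈ I, ∀ v ∈ S \ (I ∪ nbhd G I), ¬ G.Adj u v := fun u hu v hv hadj ↦
    (mem_sdiff.1 hv).2 (mem_union_right _ (mem_nbhd.2 ⟨u, hu, hadj⟩))
  intro u hu v hv
  rcases mem_union.1 hu with hu | hu <;> rcases mem_union.1 hv with hv | hv
  · exact hS u (mem_sdiff.1 hu).1 v (mem_sdiff.1 hv).1
  · exact fun h ↦ hout v hv u hu h.symm
  · exact hout u hu v hv
  · exact hI u hu v hv

lemma card_sdiff_nbhd_union : #(S \ (I ∪ nbhd G I) ∪ I) = #(S \ (I ∪ nbhd G I)) + #I :=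
  card_union_of_disjoint <| disjoint_left.2 fun _ hx hxI ↦
    (mem_sdiff.1 hx).2 (mem_union_left _ hxI)

lemma IsMaxIndep.card_le_card_inter (hI : Indep G I) (hS : IsMaxIndep G S) :
    #I ≤ #(S ∩ (I ∪ nbhd G I)) := by
  have := hS.2 _ (hI.sdiff_union hS.1)
  have := card_sdiff_add_card_inter S (I ∪ nbhd G I)
  rw [card_sdiff_nbhd_union] at *
  omega

lemma IsMaxIndep.mem_or_mem {M : V → V} (hI : Indep G I) (hM : IsMatching G M)
    (hMI : ∀ u ∈ nbhd G I, M u ∈ I) (hS : IsMaxIndep G S) {x : V} (hx : x ∈ I) :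
    x ∈ S ∨ M x ∈ S :=
  mem_or_mem_of_card_le hI hM hMI hS.1 (hS.card_le_card_inter hI) hx

lemma exists_isMaxIndep {W : Type*} [Fintype W] (H : SimpleGraph W) :
    ∃ S : Finset W, IsMaxIndep H S := by
  classical
  obtain ⟨S, hS, hmax⟩ := exists_max_image (univ.powerset.filter (Indep H)) card
    ⟨∅, by simp [Indep]⟩
  exact ⟨S, (mem_filter.1 hS).2, fun T hT ↦ hmax T (by simpa using hT)⟩

lemma core_inter_subset {M : V → V} (hI : Indep G I) (hM : IsMatching G M)
    (hMI : ∀ u ∈ nbhd G I, M u ∈ I) : core G ∩ ↑(I ∪ nbhd G I) ⊆ (I : Set V) := by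
  rintro v ⟨hcore, hvL⟩
  obtain ⟨S, hS⟩ := exists_isMaxIndep G
  have hS' : IsMaxIndep G (S \ (I ∪ nbhd G I) ∪ I) := by
    refine ⟨hI.sdiff_union hS.1, fun T hT ↦ (hS.2 T hT).trans ?_⟩
    have := card_inter_le_of_indep hI hM hMI hS.1
    have := card_sdiff_add_card_inter S (I ∪ nbhd G I)
    rw [card_sdiff_nbhd_union]
    omega
  rcases mem_union.1 (hcore _ hS') with h | h
  · exact absurd (mem_coe.1 hvL) (mem_sdiff.1 h).2
  · exact h

end MaxIndep

variable (G)

theorem stmt10 (I : Finset V) (hI : IsMaxCritIndep G I) (M : V → V)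
    (hM : IsMaxMatchingOn G (I ∪ nbhd G I) M) :
    core G ∩ ↑(I ∪ nbhd G I) =
      M '' (↑(nbhd G I) \ corona G) ∪ Dset G (I ∪ nbhd G I) := by
  have hMI : ∀ u ∈ nbhd G I, M u ∈ I := fun _ ↦ hM.mem_of_mem_nbhd hI.1
  ext v
  constructor
  · rintro ⟨hcore, hvL⟩
    have hvI : v ∈ I := core_inter_subset hI.1.1 hM.1.1 hMI ⟨hcore, hvL⟩
    by_cases hfix : M v = v
    · exact Or.inr ⟨hvL, M, hM, hfix⟩
    have hadj := hM.1.1.2 v hfix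
    refine Or.inl ⟨M v, ⟨mem_nbhd.2 ⟨v, hvI, hadj⟩, ?_⟩, hM.1.1.1 v⟩
    rintro ⟨S, hS, hMvS⟩
    exact hS.1 v (hcore S hS) _ hMvS hadj
  · rintro (⟨u, ⟨hu, hucor⟩, rfl⟩ | ⟨hvL, M', hM', hfix⟩)
    · refine ⟨fun S hS ↦ ?_, mem_union_left _ (hMI u hu)⟩
      have := hS.mem_or_mem hI.1.1 hM.1.1 hMI (hMI u hu)
      rw [hM.1.1.1] at this
      exact this.resolve_right fun h ↦ hucor ⟨S, hS, h⟩
    · have hM'I : ∀ u ∈ nbhd G I, M' u ∈ I := fun _ ↦ hM'.mem_of_mem_nbhd hI.1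
      have hvI : v ∈ I := (mem_union.1 hvL).elim id fun h ↦ hfix ▸ hM'I v h
      refine ⟨fun S hS ↦ ?_, hvL⟩
      simpa [hfix] using hS.mem_or_mem hI.1.1 hM'.1.1 hM'I hvI
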